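/- arXiv:1108.3671 — 2 statements merged into one kernel-verified Lean document; each statement's English description precedes it below -/
import Mathlib

section
/- Let (a_i)_{0≤i≤d} be a sequence with each a_i ∈ {1,-1} and (b_i)_{0≤i≤d} integers with appropriate nonvanishing so that all k_i ≠ 0. Define n_0 = 2b_0 if a_0 = 1 and n_0 = 2b_0 − 1 if a_0 = −1; for 1 ≤ i ≤ d define n_i = k_i where k_i = 2b_i + 1 if a_i = a_{i-1} = 1, k_i = 2b_i if a_i ≠ a_{i-1}, and k_i = 2b_i − 1 if a_i = a_{i-1} = −1. Set ε(j) = (-1)^{1+n_j} and a(r) = ε(0)⋯ε(r-1). Then a(r) = −a_{r-1} for all 1 ≤ r ≤ d. -/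
/-!
Since `(-1) ^ (1 + n)` depends only on the parity of `n`, the case definition of `k i` says exactly
that `ε i = a i * a (i - 1)` for `i ≥ 1`; the definition of `n 0` says the same for `i = 0` once
`a (-1)` is read as `-1`. The product `ε 0 ⋯ ε (r - 1)` then telescopes, because `a j ^ 2 = 1`.
-/

open Finset

theorem neg_one_pow_one_add_natAbs_eq_mul {u v b m : ℤ} (hu : u = 1 ∨ u = -1)
    (hv : v = 1 ∨ v = -1) (h1 : u = 1 → v = 1 → m = 2 * b + 1) (h2 : u ≠ v → m = 2 * b)
    (h3 : u = -1 → v = -1 → m = 2 * b - 1) :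
    (-1 : ℤ) ^ (1 + m).natAbs = u * v := by
  rw [← Int.coe_negOnePow]
  rcases hu with rfl | rfl <;> rcases hv with rfl | rfl
  · rw [h1 rfl rfl, show 1 + (2 * b + 1) = 2 * (b + 1) by ring, Int.negOnePow_two_mul]; rfl
  · rw [h2 (by decide), add_comm, Int.negOnePow_two_mul_add_one]; rfl
  · rw [h2 (by decide), add_comm, Int.negOnePow_two_mul_add_one]; rfl
  · rw [h3 rfl rfl, show 1 + (2 * b - 1) = 2 * b by ring, Int.negOnePow_two_mul]; rfl

theorem prod_range_eq_of_eq_mul_prev {M : Type*} [CommMonoid M] {ε u : ℕ → M} {c : M} {r : ℕ}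
    (hr : 1 ≤ r) (h0 : ε 0 = u 0 * c) (hstep : ∀ j, 1 ≤ j → j < r → ε j = u j * u (j - 1))
    (hsq : ∀ j, j + 1 < r → u j * u j = 1) :
    ∏ j ∈ range r, ε j = u (r - 1) * c := by
  induction r, hr using Nat.le_induction with
  | base => rw [prod_range_one, h0]
  | succ r hr ih =>
    rw [prod_range_succ, ih (fun j hj hjr ↦ hstep j hj (by omega)) (fun j hj ↦ hsq j (by omega)),
      hstep r hr (by omega), Nat.add_sub_cancel]
    calc u (r - 1) * c * (u r * u (r - 1))
        = u r * c * (u (r - 1) * u (r - 1)) := by ac_rfl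
      _ = u r * c := by rw [hsq (r - 1) (by omega), mul_one]

theorem two_bridge_sign_induction_general
    (d : ℕ) (a b k n : ℕ → ℤ)
    (ha : ∀ i, i ≤ d → a i = 1 ∨ a i = -1)
    (hk1 : ∀ i, 1 ≤ i → i ≤ d → a i = 1 → a (i - 1) = 1 → k i = 2 * b i + 1)
    (hk2 : ∀ i, 1 ≤ i → i ≤ d → a i ≠ a (i - 1) → k i = 2 * b i)
    (hk3 : ∀ i, 1 ≤ i → i ≤ d → a i = -1 → a (i - 1) = -1 → k i = 2 * b i - 1)
    (hn0 : n 0 = if a 0 = 1 then 2 * b 0 else 2 * b 0 - 1)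
    (hn : ∀ i, 1 ≤ i → i ≤ d → n i = k i)
    (ε : ℕ → ℤ) (hε : ∀ j, ε j = (-1 : ℤ) ^ (1 + n j).natAbs)
    (aa : ℕ → ℤ) (haa : ∀ r, aa r = ∏ j ∈ Finset.range r, ε j) :
    ∀ r, 1 ≤ r → r ≤ d → aa r = -(a (r - 1)) := by
  intro r hr hrd
  have hε0 : ε 0 = a 0 * -1 := by
    rw [hε]
    have ha0 := ha 0 (Nat.zero_le d)
    refine neg_one_pow_one_add_natAbs_eq_mul (b := b 0) ha0 (.inr rfl) ?_ ?_ ?_ <;>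
      rcases ha0 with h0 | h0 <;> simp [hn0, h0]
  have hstep : ∀ j, 1 ≤ j → j < r → ε j = a j * a (j - 1) := fun j hj1 hjr ↦ by
    rw [hε, hn j hj1 (by omega)]
    exact neg_one_pow_one_add_natAbs_eq_mul (ha j (by omega)) (ha (j - 1) (by omega))
      (hk1 j hj1 (by omega)) (hk2 j hj1 (by omega)) (hk3 j hj1 (by omega))
  have hsq : ∀ j, j + 1 < r → a j * a j = 1 := fun j hj ↦ by
    rcases ha j (by omega) with h | h <;> simp [h]
  rw [haa, prod_range_eq_of_eq_mul_prev hr hε0 hstep hsq, mul_neg_one]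

/-- Key induction for 2-bridge knots: with `n`, `k`, `ε`, and the partial
products `aa` defined from the 2-bridge data `(a_i)`, `(b_i)`, we have
`aa r = -a (r-1)` for `1 ≤ r ≤ d`. -/
theorem two_bridge_sign_induction
    (d : ℕ) (a b k n : ℕ → ℤ)
    (ha : ∀ i, i ≤ d → a i = 1 ∨ a i = -1)
    (hk1 : ∀ i, 1 ≤ i → i ≤ d → a i = 1 → a (i - 1) = 1 → k i = 2 * b i + 1)
    (hk2 : ∀ i, 1 ≤ i → i ≤ d → a i ≠ a (i - 1) → k i = 2 * b i)
    (hk3 : ∀ i, 1 ≤ i → i ≤ d → a i = -1 → a (i - 1) = -1 → k i = 2 * b i - 1)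
    (hkne : ∀ i, 1 ≤ i → i ≤ d → k i ≠ 0)
    (hn0 : n 0 = if a 0 = 1 then 2 * b 0 else 2 * b 0 - 1)
    (hn0ne : n 0 ≠ 0)
    (hn : ∀ i, 1 ≤ i → i ≤ d → n i = k i)
    (ε : ℕ → ℤ) (hε : ∀ j, ε j = (-1 : ℤ) ^ (1 + n j).natAbs)
    (aa : ℕ → ℤ) (haa : ∀ r, aa r = ∏ j ∈ Finset.range r, ε j) :
    ∀ r, 1 ≤ r → r ≤ d → aa r = -(a (r - 1)) :=
  two_bridge_sign_induction_general d a b k n ha hk1 hk2 hk3 hn0 hn ε hε aa haa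
end

section
/- With the hypotheses of the previous statement (n_i chosen from the 2-bridge data), the slope of the r-th iterate, 2·a(r) + 1/n_r, equals the 2-bridge slope invariant m_r = −2a_{r-1} + 1/k_r, for all 1 ≤ r ≤ d. -/
/-!
Write `s(r) = ∏_{j<r} ε(j)`. The parity of `k_i` records whether the sign changes at `i`:
`k_i` is even exactly when `a_i ≠ a_{i-1}`, so `ε(i) = a_{i-1} a_i`, while `ε(0) = -a_0` by the
choice of `n_0`. The product telescopes to `s(r) = -a_{r-1}`, and `n_r = k_r` does the rest.
-/

open Finset

lemma neg_one_pow_natAbs_one_add (m : ℤ) :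
    (-1 : ℤ) ^ (1 + m).natAbs = if Even m then -1 else 1 := by
  split_ifs with hm
  · exact Odd.neg_one_pow (by simpa [Int.natAbs_odd, add_comm] using hm.add_one)
  · exact Even.neg_one_pow (by rwa [Int.natAbs_even, add_comm, Int.even_add_one])

lemma even_iff_ne_of_sign_rule {u v b k : ℤ} (hu : u = 1 ∨ u = -1) (hv : v = 1 ∨ v = -1)
    (h₁ : v = 1 → u = 1 → k = 2 * b + 1) (h₂ : v ≠ u → k = 2 * b)
    (h₃ : v = -1 → u = -1 → k = 2 * b - 1) :
    Even k ↔ u ≠ v := by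
  rcases hu with rfl | rfl <;> rcases hv with rfl | rfl <;>
    simp [h₁, h₂, h₃]

lemma neg_one_pow_natAbs_one_add_eq_mul {u v k : ℤ} (hu : u = 1 ∨ u = -1)
    (hv : v = 1 ∨ v = -1) (hk : Even k ↔ u ≠ v) :
    (-1 : ℤ) ^ (1 + k).natAbs = u * v := by
  rw [neg_one_pow_natAbs_one_add]
  rcases hu with rfl | rfl <;> rcases hv with rfl | rfl <;> simp_all

lemma prod_range_succ_eq_neg_of_telescoping (d : ℕ) (a ε : ℕ → ℤ)
    (ha : ∀ i, i < d → a i = 1 ∨ a i = -1) (h₀ : ε 0 = -a 0)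
    (hsucc : ∀ i, i + 1 ≤ d → ε (i + 1) = a i * a (i + 1)) :
    ∀ r, r < d → ∏ j ∈ range (r + 1), ε j = -a r := by
  intro r
  induction r with
  | zero => simp [h₀]
  | succ r ih =>
    intro hr
    have hsq : a r * a r = 1 := by rcases ha r (by omega) with h | h <;> simp [h]
    calc ∏ j ∈ range (r + 2), ε j = -a r * (a r * a (r + 1)) := by
          rw [prod_range_succ, ih (by omega), hsucc r hr.le]
      _ = -a (r + 1) := by linear_combination (-a (r + 1)) * hsq

theorem two_bridge_slope_match_general
    (d : ℕ) (a b k n : ℕ → ℤ)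
    (ha : ∀ i, i ≤ d → a i = 1 ∨ a i = -1)
    (hk1 : ∀ i, 1 ≤ i → i ≤ d → a i = 1 → a (i - 1) = 1 → k i = 2 * b i + 1)
    (hk2 : ∀ i, 1 ≤ i → i ≤ d → a i ≠ a (i - 1) → k i = 2 * b i)
    (hk3 : ∀ i, 1 ≤ i → i ≤ d → a i = -1 → a (i - 1) = -1 → k i = 2 * b i - 1)
    (hn0 : n 0 = if a 0 = 1 then 2 * b 0 else 2 * b 0 - 1)
    (hn : ∀ i, 1 ≤ i → i ≤ d → n i = k i)
    (ε : ℕ → ℤ) (hε : ∀ j, ε j = (-1 : ℤ) ^ (1 + n j).natAbs)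
    (aa : ℕ → ℤ) (haa : ∀ r, aa r = ∏ j ∈ Finset.range r, ε j) :
    ∀ r, 1 ≤ r → r ≤ d →
      (2 * (aa r) : ℚ) + 1 / (n r : ℚ) = -2 * (a (r - 1) : ℚ) + 1 / (k r : ℚ) := by
  have hε₀ : ε 0 = -a 0 := by
    rw [hε, neg_one_pow_natAbs_one_add, hn0]
    rcases ha 0 (Nat.zero_le d) with h | h <;> simp [h]
  have hεsucc : ∀ i, i + 1 ≤ d → ε (i + 1) = a i * a (i + 1) := by
    intro i hi
    have hs := ha i (by omega)
    have hs' := ha (i + 1) hi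
    rw [hε, hn _ (by omega) hi]
    exact neg_one_pow_natAbs_one_add_eq_mul hs hs' <| even_iff_ne_of_sign_rule hs hs'
      (hk1 _ (by omega) hi) (hk2 _ (by omega) hi) (hk3 _ (by omega) hi)
  rintro r hr hrd
  obtain ⟨s, rfl⟩ : ∃ s, r = s + 1 := ⟨r - 1, by omega⟩
  have haa_s : aa (s + 1) = -a s := by
    rw [haa]
    exact prod_range_succ_eq_neg_of_telescoping d a ε (fun i hi => ha i hi.le) hε₀ hεsucc s hrd
  rw [haa_s, hn _ hr hrd, Nat.add_sub_cancel]
  push_cast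
  ring

/-- With the `n_i` chosen from the 2-bridge data, the slope of the `r`-th
iterate, `2 aa(r) + 1/n_r`, equals the 2-bridge slope invariant
`m_r = -2 a_{r-1} + 1/k_r`, for `1 ≤ r ≤ d`. -/
theorem two_bridge_slope_match
    (d : ℕ) (a b k n : ℕ → ℤ)
    (ha : ∀ i, i ≤ d → a i = 1 ∨ a i = -1)
    (hk1 : ∀ i, 1 ≤ i → i ≤ d → a i = 1 → a (i - 1) = 1 → k i = 2 * b i + 1)
    (hk2 : ∀ i, 1 ≤ i → i ≤ d → a i ≠ a (i - 1) → k i = 2 * b i)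
    (hk3 : ∀ i, 1 ≤ i → i ≤ d → a i = -1 → a (i - 1) = -1 → k i = 2 * b i - 1)
    (hkne : ∀ i, 1 ≤ i → i ≤ d → k i ≠ 0)
    (hn0 : n 0 = if a 0 = 1 then 2 * b 0 else 2 * b 0 - 1)
    (hn0ne : n 0 ≠ 0)
    (hn : ∀ i, 1 ≤ i → i ≤ d → n i = k i)
    (ε : ℕ → ℤ) (hε : ∀ j, ε j = (-1 : ℤ) ^ (1 + n j).natAbs)
    (aa : ℕ → ℤ) (haa : ∀ r, aa r = ∏ j ∈ Finset.range r, ε j) :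
    ∀ r, 1 ≤ r → r ≤ d →
      (2 * (aa r) : ℚ) + 1 / (n r : ℚ) = -2 * (a (r - 1) : ℚ) + 1 / (k r : ℚ) :=
  two_bridge_slope_match_general d a b k n ha hk1 hk2 hk3 hn0 hn ε hε aa haa
end
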